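/- In the origami monoid O_n, if w = β_i u v with u a nonempty product of α-generators whose first letter is α_i and v a nonempty product of β-generators, then w is Green's L-related to uv. Dually, if w = u v α_j with v nonempty ending in β_j and u nonempty, then w is R-related to uv. -/

import Mathlib

/-!
Write `genAB j = α_j β_j`. Besides the commutations, the relations give `α_k · genAB j =
β_j · genAB k · genAB j` for `|k - j| = 1`, so left multiplication by any `α_k` sends each
`t ∈ {β_j, genAB j}` to some `t' · r` with `t' ∈ {β_j, genAB j}`. Pushing the letters of an
α-word `P` through one at a time, `a · t = b · t` for both such `t` implies
`a · P · β_j = b · P · β_j`. With `j = I`, `b = α_i` and `a = α_i β_i α_i` (if `I = i`) or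
`a = β_I β_i α_i` (if `|i - I| = 1`) this gives `z · β_i u v = u v` for `z = α_i` resp. `β_I`.
The statement about `R` is the mirror image under the anti-automorphism of `O_n` that reverses
words and exchanges `α` with `β`.
-/

namespace Origami

/-- Generators of the origami monoid: a type bit (`true` for α, `false` for β)
and an index in `Fin (n-1)` (so indices `1,…,n-1` are represented by `0,…,n-2`). -/
inductive Gen (n : ℕ) : Type
  | mk (t : Bool) (i : Fin (n - 1))
deriving DecidableEq

abbrev W (n : ℕ) := FreeMonoid (Gen n)

def go {n : ℕ} (t : Bool) (i : Fin (n - 1)) : W n := FreeMonoid.of (Gen.mk t i)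

/-- `|i - j| = 1`. -/
def adj {n : ℕ} (i j : Fin (n - 1)) : Prop := i.val + 1 = j.val ∨ j.val + 1 = i.val

/-- `|i - j| ≥ 2`. -/
def far {n : ℕ} (i j : Fin (n - 1)) : Prop := i.val + 2 ≤ j.val ∨ j.val + 2 ≤ i.val

/-- The defining relations (1)–(5), (1a), (2a), (3a) of the origami monoid. -/
inductive Rel (n : ℕ) : W n → W n → Prop
  | idem (t : Bool) (i : Fin (n - 1)) : Rel n (go t i * go t i) (go t i)
  | jones (t : Bool) (i j : Fin (n - 1)) (h : adj i j) :
      Rel n (go t i * go t j * go t i) (go t i)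
  | inter (t : Bool) (i j : Fin (n - 1)) (h : i ≠ j) :
      Rel n (go t i * go (!t) j) (go (!t) j * go t i)
  | intra (t : Bool) (i j : Fin (n - 1)) (h : far i j) :
      Rel n (go t i * go t j) (go t j * go t i)
  | idemA (t : Bool) (i : Fin (n - 1)) :
      Rel n (go t i * go (!t) i * (go t i * go (!t) i)) (go t i * go (!t) i)
  | jonesA (t : Bool) (i j : Fin (n - 1)) (h : adj i j) :
      Rel n (go t i * go (!t) i * (go t j * go (!t) j) * (go t i * go (!t) i))
            (go t i * go (!t) i)

def oriCon (n : ℕ) : Con (W n) := conGen (Rel n)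

abbrev O (n : ℕ) := (oriCon n).Quotient

def gen {n : ℕ} (t : Bool) (i : Fin (n - 1)) : O n := (oriCon n).mk' (go t i)

def genA {n : ℕ} (i : Fin (n - 1)) : O n := gen true i

def genB {n : ℕ} (i : Fin (n - 1)) : O n := gen false i

end Origami

def GreenL {M : Type*} [Monoid M] (a b : M) : Prop :=
  Set.range (fun x : M => x * a) = Set.range (fun x : M => x * b)

def GreenR {M : Type*} [Monoid M] (a b : M) : Prop :=
  Set.range (fun x : M => a * x) = Set.range (fun x : M => b * x)

def GreenD {M : Type*} [Monoid M] (a b : M) : Prop :=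
  ∃ c : M, GreenL a c ∧ GreenR c b

section Green

variable {M N : Type*} [Monoid M] [Monoid N]

theorem GreenL.of_eq_mul {a b p q : M} (ha : a = p * b) (hb : b = q * a) : GreenL a b := by
  refine Set.Subset.antisymm ?_ ?_ <;> rintro _ ⟨x, rfl⟩
  · exact ⟨x * p, by simp only [mul_assoc, ← ha]⟩
  · exact ⟨x * q, by simp only [mul_assoc, ← hb]⟩

theorem range_unop_map_mul {f : M →* Nᵐᵒᵖ} (hf : Function.Surjective f) (a : M) :
    Set.range (fun y : N => (f a).unop * y) =
      (fun x => (f x).unop) '' Set.range (fun x : M => x * a) := by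
  rw [← Set.range_comp]
  ext y
  constructor
  · rintro ⟨y, rfl⟩
    obtain ⟨x, hx⟩ := hf (MulOpposite.op y)
    exact ⟨x, by simp [hx]⟩
  · rintro ⟨x, rfl⟩
    exact ⟨(f x).unop, by simp⟩

theorem GreenL.greenR_unop_map {f : M →* Nᵐᵒᵖ} (hf : Function.Surjective f) {a b : M}
    (h : GreenL a b) : GreenR (f a).unop (f b).unop := by
  unfold GreenL at h
  rw [GreenR, range_unop_map_mul hf, range_unop_map_mul hf, h]

theorem mul_mul_eq_mul_mul_of_mem_closure {G T : Set M} {a b : M}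
    (hT : ∀ t ∈ T, a * t = b * t) (hG : ∀ g ∈ G, ∀ t ∈ T, ∃ t' ∈ T, ∃ r, g * t = t' * r)
    {x : M} (hx : x ∈ Submonoid.closure G) : ∀ t ∈ T, a * x * t = b * x * t := by
  induction hx using Submonoid.closure_induction_right with
  | one => simpa using hT
  | mul_right x _ g hg ih =>
    intro t ht
    obtain ⟨t', ht', r, hr⟩ := hG g hg t ht
    calc a * (x * g) * t = a * x * t' * r := by simp only [mul_assoc, hr]
      _ = b * x * t' * r := by rw [ih t' ht']
      _ = b * (x * g) * t := by simp only [mul_assoc, hr]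

end Green

namespace Origami

variable {n : ℕ}

theorem adj.symm {i j : Fin (n - 1)} (h : adj i j) : adj j i := Or.symm h

theorem adj.ne {i j : Fin (n - 1)} (h : adj i j) : i ≠ j := by
  rintro rfl; unfold adj at h; omega

theorem far.ne {i j : Fin (n - 1)} (h : far i j) : i ≠ j := by
  rintro rfl; unfold far at h; omega

theorem eq_or_adj_or_far (i j : Fin (n - 1)) : i = j ∨ adj i j ∨ far i j := by
  rcases eq_or_ne i j with h | h
  · exact .inl h
  · have := Fin.val_ne_of_ne h; unfold adj far; omega

theorem mk'_eq_of_rel {x y : W n} (h : Rel n x y) : (oriCon n).mk' x = (oriCon n).mk' y :=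
  (oriCon n).eq.2 (ConGen.Rel.of x y h)

theorem gen_mul_self (t : Bool) (i : Fin (n - 1)) : gen t i * gen t i = gen t i :=
  mk'_eq_of_rel (.idem t i)

theorem gen_mul_gen_mul_gen (t : Bool) {i j : Fin (n - 1)} (h : adj i j) :
    gen t i * gen t j * gen t i = gen t i :=
  mk'_eq_of_rel (.jones t i j h)

theorem gen_mul_gen_not_comm (t : Bool) {i j : Fin (n - 1)} (h : i ≠ j) :
    gen t i * gen (!t) j = gen (!t) j * gen t i :=
  mk'_eq_of_rel (.inter t i j h)

theorem gen_mul_gen_comm (t : Bool) {i j : Fin (n - 1)} (h : far i j) :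
    gen t i * gen t j = gen t j * gen t i :=
  mk'_eq_of_rel (.intra t i j h)

theorem gen_mul_gen_not_mul_self (t : Bool) (i : Fin (n - 1)) :
    gen t i * gen (!t) i * (gen t i * gen (!t) i) = gen t i * gen (!t) i :=
  mk'_eq_of_rel (.idemA t i)

theorem gen_mul_gen_not_mul_mul_gen_mul_gen_not (t : Bool) {i j : Fin (n - 1)} (h : adj i j) :
    gen t i * gen (!t) i * (gen t j * gen (!t) j) * (gen t i * gen (!t) i) =
      gen t i * gen (!t) i :=
  mk'_eq_of_rel (.jonesA t i j h)

theorem genA_mul_self (i : Fin (n - 1)) : genA i * genA i = genA i := gen_mul_self true i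

theorem genA_mul_genA_mul_genA {i j : Fin (n - 1)} (h : adj i j) :
    genA i * genA j * genA i = genA i :=
  gen_mul_gen_mul_gen true h

theorem genB_mul_genB_mul_genB {i j : Fin (n - 1)} (h : adj i j) :
    genB i * genB j * genB i = genB i :=
  gen_mul_gen_mul_gen false h

theorem genA_mul_genB_comm {i j : Fin (n - 1)} (h : i ≠ j) :
    genA i * genB j = genB j * genA i :=
  gen_mul_gen_not_comm true h

theorem genA_mul_genA_comm {i j : Fin (n - 1)} (h : far i j) :
    genA i * genA j = genA j * genA i :=
  gen_mul_gen_comm true h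

def genAB (i : Fin (n - 1)) : O n := genA i * genB i

theorem genAB_mul_self (i : Fin (n - 1)) : genAB i * genAB i = genAB i :=
  gen_mul_gen_not_mul_self true i

theorem genAB_mul_genAB_mul_genAB {i j : Fin (n - 1)} (h : adj i j) :
    genAB i * genAB j * genAB i = genAB i :=
  gen_mul_gen_not_mul_mul_gen_mul_gen_not true h

theorem genA_mul_genAB (i : Fin (n - 1)) : genA i * genAB i = genAB i := by
  rw [genAB, ← mul_assoc, genA_mul_self]

theorem genA_mul_genAB_comm {i j : Fin (n - 1)} (h : far i j) :
    genA i * genAB j = genAB j * genA i := by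
  rw [genAB, ← mul_assoc, genA_mul_genA_comm h, mul_assoc, genA_mul_genB_comm h.ne, mul_assoc]

theorem genA_mul_genAB_of_adj {j k : Fin (n - 1)} (h : adj j k) :
    genA k * genAB j = genB j * (genAB k * genAB j) :=
  calc genA k * genAB j = genA k * (genAB j * genAB k * genAB j) := by
        rw [genAB_mul_genAB_mul_genAB h]
    _ = genA k * genA j * (genB j * genA k) * genB k * genAB j := by
        simp only [genAB, mul_assoc]
    _ = genA k * genA j * genA k * genB j * genB k * genAB j := by
        rw [← genA_mul_genB_comm h.ne.symm]; simp only [mul_assoc]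
    _ = genB j * (genAB k * genAB j) := by
        rw [genA_mul_genA_mul_genA h.symm, genA_mul_genB_comm h.ne.symm]
        simp only [genAB, mul_assoc]

theorem exists_genA_mul_eq_mul (k : Fin (n - 1)) {j : Fin (n - 1)} {t : O n}
    (ht : t ∈ ({genB j, genAB j} : Set (O n))) :
    ∃ t' ∈ ({genB j, genAB j} : Set (O n)), ∃ r, genA k * t = t' * r := by
  rcases ht with rfl | rfl
  · rcases eq_or_ne k j with rfl | hkj
    · exact ⟨genAB k, by simp, 1, (mul_one _).symm⟩
    · exact ⟨genB j, by simp, genA k, genA_mul_genB_comm hkj⟩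
  · rcases eq_or_adj_or_far k j with rfl | hkj | hkj
    · exact ⟨genAB k, by simp, 1, by rw [mul_one, genA_mul_genAB]⟩
    · exact ⟨genB j, by simp, genAB k * genAB j, genA_mul_genAB_of_adj hkj.symm⟩
    · exact ⟨genAB j, by simp, genA k, genA_mul_genAB_comm hkj⟩

theorem mul_mul_genB_eq_of_mem_closure {a b : O n} {j : Fin (n - 1)}
    (hB : a * genB j = b * genB j) (hAB : a * genAB j = b * genAB j)
    {x : O n} (hx : x ∈ Submonoid.closure (Set.range genA)) :
    a * x * genB j = b * x * genB j :=
  mul_mul_eq_mul_mul_of_mem_closure (T := {genB j, genAB j})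
    (by rintro t (rfl | rfl) <;> assumption)
    (by rintro _ ⟨k, rfl⟩ t ht; exact exists_genA_mul_eq_mul k ht) hx _ (Set.mem_insert _ _)

theorem exists_mul_genB_mul_genA_mul_genB_eq {i I : Fin (n - 1)} (h : adj i I ∨ i = I)
    {x : O n} (hx : x ∈ Submonoid.closure (Set.range genA)) :
    ∃ z, z * (genB i * genA i * x * genB I) = genA i * x * genB I := by
  rcases h with h | rfl
  · refine ⟨genB I, ?_⟩
    have hB : genB I * genB i * genA i * genB I = genA i * genB I := by
      rw [mul_assoc _ (genA i), genA_mul_genB_comm h.ne, ← mul_assoc,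
        genB_mul_genB_mul_genB h.symm]
    have hAB : genB I * genB i * genA i * genAB I = genA i * genAB I := by
      rw [mul_assoc _ (genA i), genA_mul_genAB_of_adj h.symm, ← mul_assoc,
        genB_mul_genB_mul_genB h.symm]
    simpa only [mul_assoc] using mul_mul_genB_eq_of_mem_closure hB hAB hx
  · refine ⟨genA i, ?_⟩
    have hB : genAB i * genA i * genB i = genA i * genB i := by
      rw [mul_assoc, ← genAB, genAB_mul_self, genAB]
    have hAB : genAB i * genA i * genAB i = genA i * genAB i := by
      rw [mul_assoc, genA_mul_genAB, genAB_mul_self]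
    simpa only [genAB, mul_assoc] using mul_mul_genB_eq_of_mem_closure hB hAB hx

theorem prod_map_genA_mem_closure (l : List (Fin (n - 1))) :
    (l.map genA).prod ∈ Submonoid.closure (Set.range (genA (n := n))) :=
  Submonoid.list_prod_mem _ <| by
    simpa using fun i _ => Submonoid.subset_closure (Set.mem_range_self i)

theorem greenL_genB_mul_prod_mul_prod {i I : Fin (n - 1)} (h : adj i I ∨ i = I)
    (lu lv : List (Fin (n - 1))) :
    GreenL (genB i * ((i :: lu).map genA).prod * ((I :: lv).map genB).prod)
      (((i :: lu).map genA).prod * ((I :: lv).map genB).prod) := by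
  obtain ⟨z, hz⟩ := exists_mul_genB_mul_genA_mul_genB_eq h (prod_map_genA_mem_closure lu)
  refine GreenL.of_eq_mul (p := genB i) (q := z) (by simp only [mul_assoc]) ?_
  simpa [mul_assoc] using congrArg (· * (lv.map genB).prod) hz.symm

def reverseSwap : O n →* (O n)ᵐᵒᵖ :=
  (oriCon n).lift (FreeMonoid.lift fun ⟨t, i⟩ => MulOpposite.op (gen (!t) i)) <| by
    refine Con.conGen_le.2 fun x y hxy => ?_
    rw [Con.ker_rel]
    apply MulOpposite.unop_injective
    cases hxy with
    | idem t i => exact gen_mul_self (!t) i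
    | jones t i j h => simpa [go, ← mul_assoc] using gen_mul_gen_mul_gen (!t) h
    | inter t i j h => simpa [go] using gen_mul_gen_not_comm t h.symm
    | intra t i j h => exact gen_mul_gen_comm (!t) (Or.symm h)
    | idemA t i => simpa [go, ← mul_assoc] using gen_mul_gen_not_mul_self t i
    | jonesA t i j h => simpa [go, ← mul_assoc] using gen_mul_gen_not_mul_mul_gen_mul_gen_not t h

@[simp]
theorem unop_reverseSwap_gen (t : Bool) (i : Fin (n - 1)) :
    (reverseSwap (gen t i)).unop = gen (!t) i :=
  rfl

@[simp]
theorem unop_reverseSwap_genA (i : Fin (n - 1)) : (reverseSwap (genA i)).unop = genB i :=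
  rfl

@[simp]
theorem unop_reverseSwap_genB (i : Fin (n - 1)) : (reverseSwap (genB i)).unop = genA i :=
  rfl

theorem unop_reverseSwap_unop_reverseSwap (x : O n) :
    (reverseSwap (reverseSwap x).unop).unop = x := by
  obtain ⟨w, rfl⟩ := (oriCon n).mk'_surjective x
  induction w using FreeMonoid.inductionOn' with
  | one => simp
  | of_mul g w ih =>
    obtain ⟨t, i⟩ := g
    change (reverseSwap (reverseSwap (gen t i * (oriCon n).mk' w)).unop).unop =
      gen t i * (oriCon n).mk' w
    simp only [map_mul, MulOpposite.unop_mul, unop_reverseSwap_gen, Bool.not_not, ih]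

theorem reverseSwap_surjective : Function.Surjective (reverseSwap (n := n)) := fun y =>
  ⟨(reverseSwap y.unop).unop, MulOpposite.unop_injective (unop_reverseSwap_unop_reverseSwap _)⟩

end Origami

open Origami in
/-- If `w = β_i u v` with `u` a nonempty α-word with first letter `α_i` and `v` a nonempty
β-word (whose first index `I` satisfies `|i - I| ≤ 1`), then `w L uv`.  Dually, if
`w = u v α_j` with `v` nonempty ending in `β_j` (whose last index `J` of `u` satisfies
`|j - J| ≤ 1`) and `u` nonempty, then `w R uv`. -/
theorem origami_L_R_related (n : ℕ) :
    (∀ (i : Fin (n - 1)) (lu lv : List (Fin (n - 1))),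
      lu.head? = some i → lv ≠ [] →
      (∀ I, lv.head? = some I → adj i I ∨ i = I) →
      GreenL (genB i * (lu.map genA).prod * (lv.map genB).prod)
             ((lu.map genA).prod * (lv.map genB).prod)) ∧
    (∀ (j : Fin (n - 1)) (lu lv : List (Fin (n - 1))),
      lv.getLast? = some j → lu ≠ [] →
      (∀ J, lu.getLast? = some J → adj j J ∨ j = J) →
      GreenR ((lu.map genA).prod * (lv.map genB).prod * genA j)
             ((lu.map genA).prod * (lv.map genB).prod)) := by
  have hL : ∀ (i : Fin (n - 1)) (lu lv : List (Fin (n - 1))),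
      lu.head? = some i → lv ≠ [] →
      (∀ I, lv.head? = some I → adj i I ∨ i = I) →
      GreenL (genB i * (lu.map genA).prod * (lv.map genB).prod)
             ((lu.map genA).prod * (lv.map genB).prod) := by
    rintro i (_ | ⟨i', lu⟩) (_ | ⟨I, lv⟩) hi hlv hI <;> simp only [List.head?_cons,
      List.head?_nil, Option.some.injEq, reduceCtorEq, ne_eq, not_true_eq_false] at hi hlv
    subst hi
    exact greenL_genB_mul_prod_mul_prod (hI I rfl) lu lv
  refine ⟨hL, fun j lu lv hj hlu hJ => ?_⟩
  have := (hL j lv.reverse lu.reverse (by simpa using hj) (by simpa using hlu)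
    (by simpa using hJ)).greenR_unop_map reverseSwap_surjective
  simpa [unop_map_list_prod, Function.comp_def, mul_assoc] using this
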